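/- Assume the Ornstein-Uhlenbeck hypotheses: Q, B : ℝ → ℝ^{N×N} with entries q_{ij} ∈ C_b^1(ℝ), b_{ij} ∈ C_b(ℝ), Q(s) symmetric with ⟨Q(s)ξ, ξ⟩ ≥ η₀|ξ|² for some η₀ > 0, and the evolution matrices U(s,r) (solving D_s U(s,r) = B(s)U(s,r), U(r,r) = I) satisfy ‖U(r,s)‖ ≤ C₀ e^{-ω(s-r)} for all s ≥ r and some C₀, ω > 0. Let Q_s = ∫_s^{+∞} U(s,ξ) Q(ξ) U(s,ξ)* dξ. Fix p ∈ (1,+∞) and define V_O(s,x) = (1/(2p))(1 − 1/p) ⟨Q(s) Q_s^{-1} x, Q_s^{-1} x⟩ − (1/(2p)) Tr(Q(s) Q_s^{-1}). Then there exist constants k₁ = k₁(p) > 0 and k₀ ≥ 0 such that V_O(s,x) ≥ k₁|x|² − k₀ for all (s,x) ∈ ℝ^{1+N}. -/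

import Mathlib

/-!
Write `y = Q_s⁻¹ x`. The decay of `U` makes the integral defining `Q_s` converge uniformly in `s`,
so `‖Q_s‖ ≤ M` and `|x| ≤ M |y|`; hence the quadratic term is at least `η₀ |x|² / M²`.
On the other side, Gronwall's inequality gives `‖U(ξ,s)‖ ≤ e^{L(ξ-s)}` for `ξ ≥ s`, where `L`
bounds `‖B‖`, and uniqueness for the linear ODE makes `U(s,ξ)` the inverse of `U(ξ,s)`. So
`|U(s,ξ)ᵀ v| ≥ e^{-L} |v|` for `ξ ∈ (s, s+1]`, and integrating over that interval only gives
`⟨Q_s v, v⟩ ≥ η₀ e^{-2L} |v|²`. Thus `‖Q_s⁻¹‖ ≤ e^{2L} / η₀` uniformly in `s`, which bounds the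
trace term by a constant.
-/

noncomputable section
open MeasureTheory Real Set Filter ENNReal NNReal Matrix

/-- The Euclidean norm of a vector in `ℝ^N`. -/
def enorm2 {N : ℕ} (x : Fin N → ℝ) : ℝ := Real.sqrt (∑ i, x i ^ 2)

/-- The operator norm of a matrix with respect to the Euclidean norm. -/
def opNorm {N : ℕ} (A : Matrix (Fin N) (Fin N) ℝ) : ℝ :=
  ‖Matrix.toEuclideanCLM (𝕜 := ℝ) A‖

open scoped Matrix.Norms.L2Operator

section

variable {N : ℕ}

lemma enorm2_eq_norm (x : Fin N → ℝ) : enorm2 x = ‖WithLp.toLp 2 x‖ := by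
  simp [enorm2, EuclideanSpace.norm_eq]

lemma enorm2_nonneg (x : Fin N → ℝ) : 0 ≤ enorm2 x := Real.sqrt_nonneg _

lemma enorm2_mulVec_le (A : Matrix (Fin N) (Fin N) ℝ) (x : Fin N → ℝ) :
    enorm2 (A *ᵥ x) ≤ ‖A‖ * enorm2 x := by
  rw [enorm2_eq_norm, enorm2_eq_norm]
  exact A.l2_opNorm_mulVec (WithLp.toLp 2 x)

lemma norm_le_of_enorm2_mulVec_le {A : Matrix (Fin N) (Fin N) ℝ} {C : ℝ} (hC : 0 ≤ C)
    (h : ∀ x, enorm2 (A *ᵥ x) ≤ C * enorm2 x) : ‖A‖ ≤ C := by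
  rw [← l2_opNorm_toEuclideanCLM]
  refine ContinuousLinearMap.opNorm_le_bound _ hC fun x => ?_
  have hx := h x.ofLp
  rw [enorm2_eq_norm, enorm2_eq_norm] at hx
  exact hx

lemma abs_dotProduct_le_enorm2 (x y : Fin N → ℝ) : |x ⬝ᵥ y| ≤ enorm2 x * enorm2 y := by
  have h := abs_real_inner_le_norm (WithLp.toLp 2 x : EuclideanSpace ℝ (Fin N)) (WithLp.toLp 2 y)
  rw [← enorm2_eq_norm, ← enorm2_eq_norm] at h
  simpa [PiLp.inner_apply, dotProduct, mul_comm] using h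

lemma enorm2_single (i : Fin N) : enorm2 (Pi.single i (1 : ℝ)) = 1 := by
  simp [enorm2, Pi.single_apply]

lemma Matrix.l2_opNorm_transpose {n : Type*} [Fintype n] [DecidableEq n] (A : Matrix n n ℝ) :
    ‖Aᵀ‖ = ‖A‖ := by
  rw [← conjTranspose_eq_transpose_of_trivial, l2_opNorm_conjTranspose]

lemma Matrix.l2_opNorm_one_le {n : Type*} [Fintype n] [DecidableEq n] :
    ‖(1 : Matrix n n ℝ)‖ ≤ 1 := by
  rw [← l2_opNorm_toEuclideanCLM, map_one]
  exact ContinuousLinearMap.norm_id_le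

lemma Matrix.abs_apply_le_l2_opNorm (A : Matrix (Fin N) (Fin N) ℝ) (i j : Fin N) :
    |A i j| ≤ ‖A‖ := by
  calc |A i j| = |Pi.single i 1 ⬝ᵥ A *ᵥ Pi.single j 1| := by simp
    _ ≤ enorm2 (Pi.single i 1) * enorm2 (A *ᵥ Pi.single j 1) := abs_dotProduct_le_enorm2 _ _
    _ ≤ 1 * (‖A‖ * 1) := by
      rw [enorm2_single]
      gcongr
      simpa [enorm2_single] using enorm2_mulVec_le A (Pi.single j 1)
    _ = ‖A‖ := by ring

lemma Matrix.l2_opNorm_le_of_abs_apply_le {A : Matrix (Fin N) (Fin N) ℝ} {c : ℝ}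
    (h : ∀ i j, |A i j| ≤ c) : ‖A‖ ≤ N * c := by
  rcases N.eq_zero_or_pos with rfl | hN
  · simp [Subsingleton.elim A 0]
  have hc : 0 ≤ c := (abs_nonneg _).trans (h ⟨0, hN⟩ ⟨0, hN⟩)
  refine norm_le_of_enorm2_mulVec_le (by positivity) fun x => ?_
  have hrow : ∀ i, (A *ᵥ x) i ^ 2 ≤ N * c ^ 2 * enorm2 x ^ 2 := fun i => calc
    (A *ᵥ x) i ^ 2 ≤ (∑ j, A i j ^ 2) * ∑ j, x j ^ 2 :=
      Finset.sum_mul_sq_le_sq_mul_sq Finset.univ (A i) x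
    _ ≤ (∑ _j : Fin N, c ^ 2) * enorm2 x ^ 2 := by
      rw [enorm2, Real.sq_sqrt (by positivity)]
      refine mul_le_mul_of_nonneg_right (Finset.sum_le_sum fun j _ => ?_) (by positivity)
      exact sq_le_sq.2 ((h i j).trans (le_abs_self c))
    _ = N * c ^ 2 * enorm2 x ^ 2 := by simp
  rw [enorm2]
  calc √(∑ i, (A *ᵥ x) i ^ 2) ≤ √(∑ _i : Fin N, N * c ^ 2 * enorm2 x ^ 2) :=
        Real.sqrt_le_sqrt (Finset.sum_le_sum fun i _ => hrow i)
    _ = √((N * c * enorm2 x) ^ 2) := by congr 1; simp; ring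
    _ = N * c * enorm2 x := Real.sqrt_sq (mul_nonneg (by positivity) (enorm2_nonneg x))

lemma Matrix.trace_le_card_mul_l2_opNorm (A : Matrix (Fin N) (Fin N) ℝ) : A.trace ≤ N * ‖A‖ :=
  calc A.trace = ∑ i, A i i := rfl
    _ ≤ ∑ _i : Fin N, ‖A‖ :=
      Finset.sum_le_sum fun i _ => (le_abs_self _).trans (A.abs_apply_le_l2_opNorm i i)
    _ = N * ‖A‖ := by simp

section Coercive

variable {P : Matrix (Fin N) (Fin N) ℝ} {m : ℝ}

lemma mul_enorm2_le_enorm2_mulVec (hP : ∀ v, m * enorm2 v ^ 2 ≤ P *ᵥ v ⬝ᵥ v) (v : Fin N → ℝ) :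
    m * enorm2 v ≤ enorm2 (P *ᵥ v) := by
  rcases (enorm2_nonneg v).eq_or_lt with h0 | hpos
  · rw [← h0, mul_zero]; exact enorm2_nonneg _
  refine le_of_mul_le_mul_right ?_ hpos
  calc m * enorm2 v * enorm2 v = m * enorm2 v ^ 2 := by ring
    _ ≤ P *ᵥ v ⬝ᵥ v := hP v
    _ ≤ |P *ᵥ v ⬝ᵥ v| := le_abs_self _
    _ ≤ enorm2 (P *ᵥ v) * enorm2 v := abs_dotProduct_le_enorm2 _ _

lemma isUnit_det_of_coercive (hm : 0 < m) (hP : ∀ v, m * enorm2 v ^ 2 ≤ P *ᵥ v ⬝ᵥ v) :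
    IsUnit P.det := by
  rw [← Matrix.isUnit_iff_isUnit_det, ← Matrix.mulVec_injective_iff_isUnit]
  intro a b hab
  have h := mul_enorm2_le_enorm2_mulVec hP (a - b)
  rw [mulVec_sub, hab, sub_self, enorm2_eq_norm, enorm2_eq_norm, WithLp.toLp_zero, norm_zero] at h
  rw [← sub_eq_zero, ← WithLp.toLp_eq_zero 2, ← norm_le_zero_iff]
  exact nonpos_of_mul_nonpos_right h hm

lemma l2_opNorm_inv_le_of_coercive (hm : 0 < m) (hP : ∀ v, m * enorm2 v ^ 2 ≤ P *ᵥ v ⬝ᵥ v) :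
    ‖P⁻¹‖ ≤ m⁻¹ := by
  refine norm_le_of_enorm2_mulVec_le (inv_nonneg.2 hm.le) fun u => ?_
  have h := mul_enorm2_le_enorm2_mulVec hP (P⁻¹ *ᵥ u)
  rw [mulVec_mulVec, mul_nonsing_inv _ (isUnit_det_of_coercive hm hP), one_mulVec] at h
  rw [inv_mul_eq_div, le_div_iff₀' hm]
  exact h

end Coercive

lemma hasDerivAt_of_hasDerivAt_apply {m n : Type*} [Fintype m] [Fintype n] [DecidableEq m]
    [DecidableEq n] {f : ℝ → Matrix m n ℝ} {f' : Matrix m n ℝ} {t : ℝ}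
    (h : ∀ i j, HasDerivAt (fun τ => f τ i j) (f' i j) t) : HasDerivAt f f' t := by
  have hsum : ∀ A : Matrix m n ℝ, A = ∑ i, ∑ j, A i j • single i j (1 : ℝ) :=
    fun A => by simpa only [smul_single, smul_eq_mul, mul_one] using matrix_eq_sum_single A
  rw [show f = fun τ => ∑ i, ∑ j, f τ i j • single i j (1 : ℝ) from funext fun τ => hsum (f τ),
    hsum f']
  exact HasDerivAt.fun_sum fun i _ => HasDerivAt.fun_sum fun j _ => (h i j).smul_const _

section Evolution

variable {A : Type*} [NormedRing A] [NormedAlgebra ℝ A] {B : ℝ → A} {U : ℝ → ℝ → A} {L : ℝ}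

lemma evolution_mul (hB : ∀ t, ‖B t‖ ≤ L)
    (hU : ∀ r t, HasDerivAt (fun τ => U τ r) (B t * U t r) t) (hU0 : ∀ r, U r r = 1)
    (t ξ r : ℝ) : U t ξ * U ξ r = U t r := by
  have hlip : ∀ τ, LipschitzOnWith L.toNNReal (B τ * ·) univ := fun τ =>
    LipschitzWith.lipschitzOnWith <| LipschitzWith.of_dist_le_mul fun Y Z => by
      rw [dist_eq_norm, dist_eq_norm, ← mul_sub]
      exact (norm_mul_le _ _).trans (by gcongr; exact (hB τ).trans (Real.le_coe_toNNReal L))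
  have huniq := ODE_solution_unique_univ (v := fun τ Y => B τ * Y) (s := fun _ => univ)
    (f := fun τ => U τ ξ * U ξ r) (g := fun τ => U τ r) (t₀ := ξ) hlip
    (fun τ => ⟨by simpa only [mul_assoc] using (hU ξ τ).mul_const (U ξ r), trivial⟩)
    (fun τ => ⟨hU r τ, trivial⟩) (by simp only [hU0, one_mul])
  exact congrFun huniq t

lemma norm_evolution_le (hB : ∀ t, ‖B t‖ ≤ L)
    (hU : ∀ r t, HasDerivAt (fun τ => U τ r) (B t * U t r) t) (hU0 : ∀ r, U r r = 1)
    {r t : ℝ} (hrt : r ≤ t) : ‖U t r‖ ≤ ‖(1 : A)‖ * exp (L * (t - r)) := by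
  have h := norm_le_gronwallBound_of_norm_deriv_right_le (f := fun τ => U τ r)
    (f' := fun τ => B τ * U τ r) (δ := ‖(1 : A)‖) (K := L) (ε := 0) (a := r) (b := t)
    (fun τ _ => (hU r τ).continuousAt.continuousWithinAt) (fun τ _ => (hU r τ).hasDerivWithinAt)
    (by rw [hU0])
    (fun τ _ => by
      rw [add_zero]
      exact (norm_mul_le _ _).trans (mul_le_mul_of_nonneg_right (hB τ) (norm_nonneg _)))
    t ⟨hrt, le_rfl⟩
  simpa only [gronwallBound_ε0] using h

end Evolution

lemma continuous_evolution_right {B : ℝ → Matrix (Fin N) (Fin N) ℝ}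
    {U : ℝ → ℝ → Matrix (Fin N) (Fin N) ℝ} {L : ℝ} (hB : ∀ t, ‖B t‖ ≤ L)
    (hU : ∀ r t, HasDerivAt (fun τ => U τ r) (B t * U t r) t) (hU0 : ∀ r, U r r = 1)
    (s : ℝ) : Continuous fun ξ => U s ξ := by
  have hinv : ∀ ξ, U ξ s * U s ξ = 1 := fun ξ => by rw [evolution_mul hB hU hU0, hU0]
  have hcont : Continuous fun ξ => U ξ s :=
    continuous_iff_continuousAt.2 fun ξ => (hU s ξ).continuousAt
  simp_rw [← inv_eq_right_inv (hinv _)]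
  refine continuous_iff_continuousAt.2 fun ξ => ContinuousAt.comp ?_ hcont.continuousAt
  refine continuousAt_matrix_inv _ ?_
  rw [Ring.inverse_eq_inv']
  exact continuousAt_inv₀ (isUnit_det_of_right_inverse (hinv ξ)).ne_zero

lemma integrableOn_exp_neg_mul_sub_Ioi {b : ℝ} (hb : 0 < b) (s : ℝ) :
    IntegrableOn (fun ξ => exp (-b * (ξ - s))) (Ioi s) := by
  simp_rw [mul_sub, sub_eq_add_neg, Real.exp_add]
  exact (integrableOn_exp_mul_Ioi (neg_lt_zero.2 hb) s).mul_const _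

lemma integral_exp_neg_mul_sub_Ioi {b : ℝ} (hb : 0 < b) (s : ℝ) :
    ∫ ξ in Ioi s, exp (-b * (ξ - s)) = b⁻¹ := by
  simp_rw [mul_sub, sub_eq_add_neg, Real.exp_add]
  rw [integral_mul_const, integral_exp_mul_Ioi (neg_lt_zero.2 hb), neg_div_neg_eq,
    div_mul_eq_mul_div, ← Real.exp_add, add_neg_cancel, Real.exp_zero, one_div]

lemma le_setIntegral_Ioi_of_le_on_Ioc {f : ℝ → ℝ} {s c : ℝ} (hf : IntegrableOn f (Ioi s))
    (hf0 : ∀ x ∈ Ioi s, 0 ≤ f x) (hc : ∀ x ∈ Ioc s (s + 1), c ≤ f x) :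
    c ≤ ∫ x in Ioi s, f x :=
  calc c = ∫ _ in Ioc s (s + 1), c := by simp
    _ ≤ ∫ x in Ioc s (s + 1), f x :=
      setIntegral_mono_on (integrableOn_const measure_Ioc_lt_top.ne)
        (hf.mono_set Ioc_subset_Ioi_self) measurableSet_Ioc hc
    _ ≤ ∫ x in Ioi s, f x :=
      setIntegral_mono_set hf ((ae_restrict_iff' measurableSet_Ioi).2 (Eventually.of_forall hf0))
        Ioc_subset_Ioi_self.eventuallyLE

lemma mulVec_dotProduct_eq_sum {m n : Type*} [Fintype m] [Fintype n] (A : Matrix m n ℝ)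
    (u : n → ℝ) (v : m → ℝ) :
    A *ᵥ u ⬝ᵥ v = ∑ i, ∑ j, A i j * (u j * v i) := by
  simp only [dotProduct, mulVec, Finset.sum_mul]
  exact Finset.sum_congr rfl fun i _ => Finset.sum_congr rfl fun j _ => by ring

section EntrywiseIntegral

variable {α m n : Type*} [MeasurableSpace α] {μ : Measure α} [Fintype m] [Fintype n]
  {F : α → Matrix m n ℝ}

lemma integrable_mulVec_dotProduct (hF : ∀ i j, Integrable (fun a => F a i j) μ)
    (u : n → ℝ) (v : m → ℝ) : Integrable (fun a => F a *ᵥ u ⬝ᵥ v) μ := by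
  simp_rw [mulVec_dotProduct_eq_sum]
  exact integrable_finsetSum _ fun i _ => integrable_finsetSum _ fun j _ => (hF i j).mul_const _

lemma mulVec_dotProduct_eq_integral {P : Matrix m n ℝ}
    (hF : ∀ i j, Integrable (fun a => F a i j) μ) (hP : ∀ i j, P i j = ∫ a, F a i j ∂μ)
    (u : n → ℝ) (v : m → ℝ) : P *ᵥ u ⬝ᵥ v = ∫ a, F a *ᵥ u ⬝ᵥ v ∂μ := by
  simp_rw [mulVec_dotProduct_eq_sum, hP, ← integral_mul_const]
  rw [integral_finsetSum _ fun i _ => integrable_finsetSum _ fun j _ => (hF i j).mul_const _]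
  exact Finset.sum_congr rfl fun i _ =>
    (integral_finsetSum _ fun j _ => (hF i j).mul_const _).symm

end EntrywiseIntegral

section Covariance

variable {Q : ℝ → Matrix (Fin N) (Fin N) ℝ} {U : ℝ → ℝ → Matrix (Fin N) (Fin N) ℝ}
  {Qs : ℝ → Matrix (Fin N) (Fin N) ℝ} {KQ C₀ ω : ℝ}

lemma l2_opNorm_conj_evolution_le (hQ : ∀ ξ, ‖Q ξ‖ ≤ KQ)
    (hdecay : ∀ r s, r ≤ s → ‖U r s‖ ≤ C₀ * exp (-ω * (s - r))) {s ξ : ℝ} (hsξ : s ≤ ξ) :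
    ‖U s ξ * Q ξ * (U s ξ)ᵀ‖ ≤ KQ * C₀ ^ 2 * exp (-(2 * ω) * (ξ - s)) := by
  have hKQ : 0 ≤ KQ := (norm_nonneg _).trans (hQ ξ)
  calc ‖U s ξ * Q ξ * (U s ξ)ᵀ‖ ≤ ‖U s ξ * Q ξ‖ * ‖(U s ξ)ᵀ‖ := l2_opNorm_mul _ _
    _ ≤ ‖U s ξ‖ * ‖Q ξ‖ * ‖U s ξ‖ := by
        rw [l2_opNorm_transpose]
        exact mul_le_mul_of_nonneg_right (l2_opNorm_mul _ _) (norm_nonneg _)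
    _ ≤ KQ * ‖U s ξ‖ ^ 2 := by nlinarith [hQ ξ, norm_nonneg (U s ξ)]
    _ ≤ KQ * (C₀ * exp (-ω * (ξ - s))) ^ 2 := by gcongr; exact hdecay s ξ hsξ
    _ = KQ * C₀ ^ 2 * exp (-(2 * ω) * (ξ - s)) := by
        rw [mul_pow, ← Real.exp_nat_mul]; ring_nf

lemma integrableOn_conj_evolution_apply (hQc : Continuous Q) (hQ : ∀ ξ, ‖Q ξ‖ ≤ KQ)
    (hdecay : ∀ r s, r ≤ s → ‖U r s‖ ≤ C₀ * exp (-ω * (s - r))) (hω : 0 < ω) {s : ℝ}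
    (hUc : Continuous fun ξ => U s ξ) (i j : Fin N) :
    IntegrableOn (fun ξ => (U s ξ * Q ξ * (U s ξ)ᵀ) i j) (Ioi s) := by
  have hg : Continuous fun ξ => U s ξ * Q ξ * (U s ξ)ᵀ :=
    (hUc.matrix_mul hQc).matrix_mul hUc.matrix_transpose
  refine Integrable.mono'
    ((integrableOn_exp_neg_mul_sub_Ioi (b := 2 * ω) (by positivity) s).const_mul (KQ * C₀ ^ 2))
    (hg.matrix_elem i j).aestronglyMeasurable
    ((ae_restrict_iff' measurableSet_Ioi).2 (Eventually.of_forall fun ξ hξ => ?_))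
  exact (abs_apply_le_l2_opNorm _ i j).trans (l2_opNorm_conj_evolution_le hQ hdecay (le_of_lt hξ))

lemma abs_covariance_apply_le (hQ : ∀ ξ, ‖Q ξ‖ ≤ KQ)
    (hdecay : ∀ r s, r ≤ s → ‖U r s‖ ≤ C₀ * exp (-ω * (s - r))) (hω : 0 < ω) {s : ℝ}
    (hQs : ∀ i j, Qs s i j = ∫ ξ in Ioi s, (U s ξ * Q ξ * (U s ξ)ᵀ) i j) (i j : Fin N) :
    |Qs s i j| ≤ KQ * C₀ ^ 2 * (2 * ω)⁻¹ := by
  rw [← Real.norm_eq_abs, hQs, ← integral_exp_neg_mul_sub_Ioi (by positivity : 0 < 2 * ω) s,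
    ← integral_const_mul (KQ * C₀ ^ 2)]
  refine norm_integral_le_of_norm_le
    ((integrableOn_exp_neg_mul_sub_Ioi (b := 2 * ω) (by positivity) s).const_mul
    (KQ * C₀ ^ 2)) ((ae_restrict_iff' measurableSet_Ioi).2 (Eventually.of_forall fun ξ hξ => ?_))
  exact (abs_apply_le_l2_opNorm _ i j).trans (l2_opNorm_conj_evolution_le hQ hdecay (le_of_lt hξ))

lemma covariance_coercive {η₀ L : ℝ} (hη₀ : 0 ≤ η₀) (hL : 0 ≤ L) (hQc : Continuous Q)
    (hQ : ∀ ξ, ‖Q ξ‖ ≤ KQ) (hQell : ∀ ξ y, η₀ * enorm2 y ^ 2 ≤ ∑ i, (Q ξ *ᵥ y) i * y i)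
    (hdecay : ∀ r s, r ≤ s → ‖U r s‖ ≤ C₀ * exp (-ω * (s - r))) (hω : 0 < ω)
    (hinv : ∀ s ξ, U s ξ * U ξ s = 1) (hgrow : ∀ r t, r ≤ t → ‖U t r‖ ≤ exp (L * (t - r)))
    {s : ℝ} (hUc : Continuous fun ξ => U s ξ)
    (hQs : ∀ i j, Qs s i j = ∫ ξ in Ioi s, (U s ξ * Q ξ * (U s ξ)ᵀ) i j) (v : Fin N → ℝ) :
    η₀ * exp (-L) ^ 2 * enorm2 v ^ 2 ≤ Qs s *ᵥ v ⬝ᵥ v := by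
  have hint := integrableOn_conj_evolution_apply hQc hQ hdecay hω hUc
  set w := fun ξ => (U s ξ)ᵀ *ᵥ v
  have hform : ∀ ξ, (U s ξ * Q ξ * (U s ξ)ᵀ) *ᵥ v ⬝ᵥ v = Q ξ *ᵥ w ξ ⬝ᵥ w ξ := fun ξ => by
    rw [← mulVec_mulVec, ← mulVec_mulVec, dotProduct_comm, dotProduct_mulVec, ← mulVec_transpose,
      dotProduct_comm]
  have hw : ∀ ξ ∈ Ioc s (s + 1), exp (-L) * enorm2 v ≤ enorm2 (w ξ) := fun ξ hξ => by
    have hv : v = (U ξ s)ᵀ *ᵥ w ξ := by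
      rw [mulVec_mulVec, ← transpose_mul, hinv, transpose_one, one_mulVec]
    have hexp : exp (L * (ξ - s)) ≤ exp L :=
      exp_le_exp.2 (mul_le_of_le_one_right hL (by linarith [hξ.2]))
    have hvw : enorm2 v ≤ exp L * enorm2 (w ξ) :=
      calc enorm2 v = enorm2 ((U ξ s)ᵀ *ᵥ w ξ) := by rw [← hv]
        _ ≤ ‖U ξ s‖ * enorm2 (w ξ) := by
          rw [← l2_opNorm_transpose (U ξ s)]; exact enorm2_mulVec_le _ _
        _ ≤ exp L * enorm2 (w ξ) :=
          mul_le_mul_of_nonneg_right ((hgrow s ξ hξ.1.le).trans hexp) (enorm2_nonneg _)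
    calc exp (-L) * enorm2 v ≤ exp (-L) * (exp L * enorm2 (w ξ)) := by gcongr
      _ = enorm2 (w ξ) := by rw [← mul_assoc, ← exp_add, neg_add_cancel, exp_zero, one_mul]
  rw [mulVec_dotProduct_eq_integral hint hQs,
    setIntegral_congr_fun measurableSet_Ioi fun ξ _ => hform ξ]
  refine le_setIntegral_Ioi_of_le_on_Ioc ?_ (fun ξ _ => ?_) (fun ξ hξ => ?_)
  · exact (integrable_mulVec_dotProduct hint v v).congr (ae_of_all _ hform)
  · exact (by positivity : 0 ≤ η₀ * enorm2 (w ξ) ^ 2).trans (hQell ξ (w ξ))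
  · have hvw := hw ξ hξ
    calc η₀ * exp (-L) ^ 2 * enorm2 v ^ 2 = η₀ * (exp (-L) * enorm2 v) ^ 2 := by ring
      _ ≤ η₀ * enorm2 (w ξ) ^ 2 := by
        have := enorm2_nonneg v
        gcongr
      _ ≤ Q ξ *ᵥ w ξ ⬝ᵥ w ξ := hQell ξ (w ξ)

end Covariance

lemma trace_mul_inv_le_of_coercive {Q P : Matrix (Fin N) (Fin N) ℝ} {KQ m : ℝ} (hQ : ‖Q‖ ≤ KQ)
    (hm : 0 < m) (hP : ∀ v, m * enorm2 v ^ 2 ≤ P *ᵥ v ⬝ᵥ v) :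
    (Q * P⁻¹).trace ≤ N * (KQ * m⁻¹) :=
  calc (Q * P⁻¹).trace ≤ N * ‖Q * P⁻¹‖ := (Q * P⁻¹).trace_le_card_mul_l2_opNorm
    _ ≤ N * (‖Q‖ * ‖P⁻¹‖) := by gcongr; exact l2_opNorm_mul Q P⁻¹
    _ ≤ N * (KQ * m⁻¹) := by
      gcongr
      · exact (norm_nonneg Q).trans hQ
      · exact l2_opNorm_inv_le_of_coercive hm hP

lemma quadForm_inv_mulVec_lower_bound {Q P : Matrix (Fin N) (Fin N) ℝ} {η₀ m M : ℝ} (hη₀ : 0 ≤ η₀)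
    (hQ : ∀ ξ, η₀ * enorm2 ξ ^ 2 ≤ ∑ i, (Q *ᵥ ξ) i * ξ i)
    (hm : 0 < m) (hP : ∀ v, m * enorm2 v ^ 2 ≤ P *ᵥ v ⬝ᵥ v) (hM : 0 < M) (hPM : ‖P‖ ≤ M)
    (x : Fin N → ℝ) :
    η₀ / M ^ 2 * enorm2 x ^ 2 ≤ ∑ i, (Q *ᵥ (P⁻¹ *ᵥ x)) i * (P⁻¹ *ᵥ x) i := by
  set y := P⁻¹ *ᵥ x
  have hx : enorm2 x ≤ M * enorm2 y := by
    have hPy : P *ᵥ y = x := by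
      rw [mulVec_mulVec, mul_nonsing_inv _ (isUnit_det_of_coercive hm hP), one_mulVec]
    calc enorm2 x = enorm2 (P *ᵥ y) := by rw [hPy]
      _ ≤ ‖P‖ * enorm2 y := enorm2_mulVec_le P y
      _ ≤ M * enorm2 y := mul_le_mul_of_nonneg_right hPM (enorm2_nonneg y)
  refine le_trans ?_ (hQ y)
  rw [div_mul_eq_mul_div, div_le_iff₀ (by positivity)]
  have := enorm2_nonneg x
  calc η₀ * enorm2 x ^ 2 ≤ η₀ * (M * enorm2 y) ^ 2 := by gcongr
    _ = η₀ * enorm2 y ^ 2 * M ^ 2 := by ring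

lemma potential_lower_bound {Q P : Matrix (Fin N) (Fin N) ℝ} {p η₀ KQ m M : ℝ} (hp : 1 < p)
    (hη₀ : 0 ≤ η₀) (hQell : ∀ ξ, η₀ * enorm2 ξ ^ 2 ≤ ∑ i, (Q *ᵥ ξ) i * ξ i) (hQ : ‖Q‖ ≤ KQ)
    (hm : 0 < m) (hP : ∀ v, m * enorm2 v ^ 2 ≤ P *ᵥ v ⬝ᵥ v) (hM : 0 < M) (hPM : ‖P‖ ≤ M)
    (x : Fin N → ℝ) :
    1 / (2 * p) * (1 - 1 / p) * (η₀ / M ^ 2) * enorm2 x ^ 2 - 1 / (2 * p) * (N * (KQ * m⁻¹)) ≤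
      1 / (2 * p) * (1 - 1 / p) * (∑ i, (Q *ᵥ (P⁻¹ *ᵥ x)) i * (P⁻¹ *ᵥ x) i)
        - 1 / (2 * p) * (Q * P⁻¹).trace := by
  have hp0 : 0 < p := by linarith
  have hp1 : 0 ≤ 1 - 1 / p := sub_nonneg.2 ((div_le_one hp0).2 hp.le)
  have hquad := mul_le_mul_of_nonneg_left (quadForm_inv_mulVec_lower_bound hη₀ hQell hm hP hM hPM x)
    (by positivity : 0 ≤ 1 / (2 * p) * (1 - 1 / p))
  have htrace := mul_le_mul_of_nonneg_left
    (trace_mul_inv_le_of_coercive hQ hm hP) (by positivity : 0 ≤ 1 / (2 * p))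
  linarith

end

theorem statement2_general (N : ℕ) (p : ℝ) (hp : 1 < p)
    (Q B : ℝ → Matrix (Fin N) (Fin N) ℝ)
    (hQreg : ∀ i j, ContDiff ℝ 1 fun s => Q s i j)
    (hQbd : ∃ C : ℝ, ∀ (s : ℝ) (i j : Fin N),
      |Q s i j| ≤ C ∧ |deriv (fun t => Q t i j) s| ≤ C)
    (hBbd : ∃ C : ℝ, ∀ (s : ℝ) (i j : Fin N), |B s i j| ≤ C)
    (η₀ : ℝ) (hη₀ : 0 < η₀)
    (hQell : ∀ (s : ℝ) (ξ : Fin N → ℝ),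
      η₀ * enorm2 ξ ^ 2 ≤ ∑ i, (Q s).mulVec ξ i * ξ i)
    (U : ℝ → ℝ → Matrix (Fin N) (Fin N) ℝ)
    (hU0 : ∀ r, U r r = 1)
    (hUderiv : ∀ (r s : ℝ) (i j : Fin N),
      HasDerivAt (fun t => U t r i j) ((B s * U s r) i j) s)
    (C₀ ω : ℝ) (hω : 0 < ω)
    (hdecay : ∀ r s : ℝ, r ≤ s → opNorm (U r s) ≤ C₀ * Real.exp (-ω * (s - r)))
    (Qs : ℝ → Matrix (Fin N) (Fin N) ℝ)
    (hQs : ∀ (s : ℝ) (i j : Fin N),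
      Qs s i j = ∫ ξ in Set.Ioi s, (U s ξ * Q ξ * (U s ξ)ᵀ) i j)
    :
    ∃ k₁ : ℝ, 0 < k₁ ∧ ∃ k₀ : ℝ, 0 ≤ k₀ ∧
      ∀ (s : ℝ) (x : Fin N → ℝ),
        k₁ * enorm2 x ^ 2 - k₀ ≤
          (1 / (2 * p)) * (1 - 1 / p) *
              (∑ i, (Q s).mulVec ((Qs s)⁻¹.mulVec x) i * ((Qs s)⁻¹.mulVec x) i)
            - (1 / (2 * p)) * Matrix.trace (Q s * (Qs s)⁻¹) := by
  obtain ⟨CQ, hCQ⟩ := hQbd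
  obtain ⟨CB, hCB⟩ := hBbd
  have hQ : ∀ ξ, ‖Q ξ‖ ≤ N * CQ := fun ξ => l2_opNorm_le_of_abs_apply_le fun i j => (hCQ ξ i j).1
  have hB : ∀ t, ‖B t‖ ≤ N * CB := fun t => l2_opNorm_le_of_abs_apply_le (hCB t)
  have hU : ∀ r t, HasDerivAt (fun τ => U τ r) (B t * U t r) t := fun r t =>
    hasDerivAt_of_hasDerivAt_apply (hUderiv r t)
  have hQc : Continuous Q := continuous_matrix fun i j => (hQreg i j).continuous
  set m := η₀ * exp (-(N * CB)) ^ 2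
  set M := N * (N * CQ * C₀ ^ 2 * (2 * ω)⁻¹) + 1
  have hm : 0 < m := by positivity
  have hKQ : 0 ≤ (N : ℝ) * CQ := (norm_nonneg _).trans (hQ 0)
  have hM : 0 < M := by positivity
  have hcoer : ∀ s v, m * enorm2 v ^ 2 ≤ Qs s *ᵥ v ⬝ᵥ v := fun s =>
    covariance_coercive hη₀.le ((norm_nonneg _).trans (hB 0)) hQc hQ hQell hdecay hω
      (fun s ξ => by rw [evolution_mul hB hU hU0, hU0])
      (fun r t hrt => (norm_evolution_le hB hU hU0 hrt).trans
        (mul_le_of_le_one_left (exp_pos _).le l2_opNorm_one_le))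
      (continuous_evolution_right hB hU hU0 s) (hQs s)
  have hbound : ∀ s, ‖Qs s‖ ≤ M := fun s =>
    (l2_opNorm_le_of_abs_apply_le (abs_covariance_apply_le hQ hdecay hω (hQs s))).trans
      (le_add_of_nonneg_right zero_le_one)
  have hc₁ : 0 < 1 - 1 / p := sub_pos.2 ((div_lt_one (by linarith)).2 hp)
  exact ⟨1 / (2 * p) * (1 - 1 / p) * (η₀ / M ^ 2), by positivity,
    1 / (2 * p) * (N * (N * CQ * m⁻¹)), by positivity, fun s x =>
      potential_lower_bound hp hη₀.le (hQell s) (hQ s) hm (hcoer s) hM (hbound s) x⟩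

/-- lower bound for the potential `V_O` arising from the transformed
parabolic Ornstein-Uhlenbeck operator: `V_O(s,x) ≥ k₁|x|² − k₀`. -/
theorem statement2 (N : ℕ) (hN : 1 ≤ N) (p : ℝ) (hp : 1 < p)
    (Q B : ℝ → Matrix (Fin N) (Fin N) ℝ)
    (hQreg : ∀ i j, ContDiff ℝ 1 fun s => Q s i j)
    (hQbd : ∃ C : ℝ, ∀ (s : ℝ) (i j : Fin N),
      |Q s i j| ≤ C ∧ |deriv (fun t => Q t i j) s| ≤ C)
    (hBcont : ∀ i j, Continuous fun s => B s i j)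
    (hBbd : ∃ C : ℝ, ∀ (s : ℝ) (i j : Fin N), |B s i j| ≤ C)
    (hQsym : ∀ s, (Q s)ᵀ = Q s)
    (η₀ : ℝ) (hη₀ : 0 < η₀)
    (hQell : ∀ (s : ℝ) (ξ : Fin N → ℝ),
      η₀ * enorm2 ξ ^ 2 ≤ ∑ i, (Q s).mulVec ξ i * ξ i)
    (U : ℝ → ℝ → Matrix (Fin N) (Fin N) ℝ)
    (hU0 : ∀ r, U r r = 1)
    (hUderiv : ∀ (r s : ℝ) (i j : Fin N),
      HasDerivAt (fun t => U t r i j) ((B s * U s r) i j) s)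
    (C₀ ω : ℝ) (hC₀ : 0 < C₀) (hω : 0 < ω)
    (hdecay : ∀ r s : ℝ, r ≤ s → opNorm (U r s) ≤ C₀ * Real.exp (-ω * (s - r)))
    (Qs : ℝ → Matrix (Fin N) (Fin N) ℝ)
    (hQs : ∀ (s : ℝ) (i j : Fin N),
      Qs s i j = ∫ ξ in Set.Ioi s, (U s ξ * Q ξ * (U s ξ)ᵀ) i j)
    :
    ∃ k₁ : ℝ, 0 < k₁ ∧ ∃ k₀ : ℝ, 0 ≤ k₀ ∧
      ∀ (s : ℝ) (x : Fin N → ℝ),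
        k₁ * enorm2 x ^ 2 - k₀ ≤
          (1 / (2 * p)) * (1 - 1 / p) *
              (∑ i, (Q s).mulVec ((Qs s)⁻¹.mulVec x) i * ((Qs s)⁻¹.mulVec x) i)
            - (1 / (2 * p)) * Matrix.trace (Q s * (Qs s)⁻¹) :=
  statement2_general N p hp Q B hQreg hQbd hBbd η₀ hη₀ hQell U hU0 hUderiv C₀ ω hω hdecay Qs hQs
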